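/- Fix integers d ≥ 3 and ℓ ≥ 1 and let z ∈ ℂ with Im z > 0. Let P be the inverse of H_{𝒴_ℓ} − z·I − m_sc(z)·𝕀∂, where 𝒴_ℓ is the ball of radius ℓ in the infinite (d−1)-ary tree with root o. Then (P·𝕀∂·P)_{oo} = m_sc(z)^{2ℓ+2}. -/

import Mathlib

open scoped Classical

noncomputable section

/-- Vertices of the ball of radius `ℓ` in the infinite `m`-ary rooted tree:
words over `Fin m` of length at most `ℓ`. -/
def TreeBallY (m ℓ : ℕ) : Type := {l : List (Fin m) // l.length ≤ ℓ}

instance (m ℓ : ℕ) : DecidableEq (TreeBallY m ℓ) :=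
  inferInstanceAs (DecidableEq {l : List (Fin m) // l.length ≤ ℓ})

instance (m ℓ : ℕ) : Fintype (TreeBallY m ℓ) :=
  Fintype.ofSurjective
    (fun p : (Σ k : Fin (ℓ + 1), List.Vector (Fin m) k) =>
      (⟨p.2.toList, by
        have h1 : p.2.toList.length = (p.1 : ℕ) := p.2.toList_length
        have h2 := p.1.isLt
        omega⟩ : TreeBallY m ℓ))
    (fun l => ⟨⟨⟨l.1.length, Nat.lt_succ_of_le l.2⟩, ⟨l.1, rfl⟩⟩, rfl⟩)

/-- The tree structure on the ball of radius `ℓ` of the `m`-ary rooted tree: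
`x` is adjacent to `y` iff one of them is obtained from the other by appending one letter
(i.e. one is the parent of the other). -/
def treeGraphY (m ℓ : ℕ) : SimpleGraph (TreeBallY m ℓ) :=
  SimpleGraph.fromRel (fun x y => ∃ a : Fin m, y.1 = x.1 ++ [a])

/-- The root of the tree: the empty word. -/
def rootY (m ℓ : ℕ) : TreeBallY m ℓ := ⟨[], Nat.zero_le _⟩

/-- The normalized adjacency matrix `A/√(d-1)` of the ball `𝒴_ℓ` of radius `ℓ` in the
infinite `(d-1)`-ary tree. -/
def HmatY (d ℓ : ℕ) : Matrix (TreeBallY (d - 1) ℓ) (TreeBallY (d - 1) ℓ) ℂ :=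
  fun x y => if (treeGraphY (d - 1) ℓ).Adj x y then (Real.sqrt ((d : ℝ) - 1) : ℂ)⁻¹ else 0

/-- The leaf indicator `𝕀∂` of `𝒴_ℓ`: the diagonal 0-1 matrix whose entry at `x` is `1`
exactly when `dist(x, o) = ℓ`. -/
def IbdY (d ℓ : ℕ) : Matrix (TreeBallY (d - 1) ℓ) (TreeBallY (d - 1) ℓ) ℂ :=
  Matrix.diagonal (fun x => if (treeGraphY (d - 1) ℓ).dist (rootY (d - 1) ℓ) x = ℓ then 1 else 0)

/-- Vertices of the ball `𝒳_ℓ` of radius `ℓ` in the infinite `d`-regular tree: the root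
(`none`), or a first step in `Fin d` followed by a word over `Fin (d-1)` of length at most
`ℓ - 1`. -/
def TreeBallX (d ℓ : ℕ) : Type := Option (Fin d × TreeBallY (d - 1) (ℓ - 1))

instance (d ℓ : ℕ) : DecidableEq (TreeBallX d ℓ) :=
  inferInstanceAs (DecidableEq (Option (Fin d × TreeBallY (d - 1) (ℓ - 1))))

instance (d ℓ : ℕ) : Fintype (TreeBallX d ℓ) :=
  inferInstanceAs (Fintype (Option (Fin d × TreeBallY (d - 1) (ℓ - 1))))

/-- The tree structure on the ball `𝒳_ℓ` of radius `ℓ` of the `d`-regular tree: the root is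
adjacent to the `d` one-step vertices, and within each branch two vertices are adjacent iff one
is the parent of the other. -/
def treeGraphX (d ℓ : ℕ) : SimpleGraph (TreeBallX d ℓ) :=
  SimpleGraph.fromRel (fun x y =>
    (∃ a : Fin d, x = none ∧ y = some (a, ⟨[], Nat.zero_le _⟩)) ∨
    (∃ (a : Fin d) (s t : TreeBallY (d - 1) (ℓ - 1)),
      x = some (a, s) ∧ y = some (a, t) ∧ ∃ b : Fin (d - 1), t.1 = s.1 ++ [b]))

/-- The root of the `d`-regular tree ball `𝒳_ℓ`. -/
def rootX (d ℓ : ℕ) : TreeBallX d ℓ := none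

/-- The normalized adjacency matrix `A/√(d-1)` of the ball `𝒳_ℓ` of radius `ℓ` in the
infinite `d`-regular tree. -/
def HmatX (d ℓ : ℕ) : Matrix (TreeBallX d ℓ) (TreeBallX d ℓ) ℂ :=
  fun x y => if (treeGraphX d ℓ).Adj x y then (Real.sqrt ((d : ℝ) - 1) : ℂ)⁻¹ else 0

/-- The leaf indicator `𝕀∂` of `𝒳_ℓ`. -/
def IbdX (d ℓ : ℕ) : Matrix (TreeBallX d ℓ) (TreeBallX d ℓ) ℂ :=
  Matrix.diagonal (fun x => if (treeGraphX d ℓ).dist (rootX d ℓ) x = ℓ then 1 else 0)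

/-- Longest common prefix of two words. -/
def lcp {m : ℕ} : List (Fin m) → List (Fin m) → List (Fin m)
  | [], _ => []
  | _ :: _, [] => []
  | a :: s, b :: t => if a = b then a :: lcp s t else []

theorem lcp_length_le_left {m : ℕ} : ∀ s t : List (Fin m), (lcp s t).length ≤ s.length
  | [], _ => by simp [lcp]
  | _ :: _, [] => by simp [lcp]
  | a :: s, b :: t => by
    by_cases h : a = b
    · simp only [lcp, if_pos h, List.length_cons]
      exact Nat.succ_le_succ (lcp_length_le_left s t)
    · simp [lcp, h]

/-- The least common ancestor of two vertices of `𝒴_ℓ`: their longest common prefix. -/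
def lcaY {m ℓ : ℕ} (x y : TreeBallY m ℓ) : TreeBallY m ℓ :=
  ⟨lcp x.1 y.1, le_trans (lcp_length_le_left _ _) x.2⟩

/-- `anc(x,y)`: the distance from the least common ancestor of `x` and `y` to the root `o`. -/
def ancY {m ℓ : ℕ} (x y : TreeBallY m ℓ) : ℕ :=
  (treeGraphY m ℓ).dist (rootY m ℓ) (lcaY x y)

end

/-!
Let `s = 1/√(d-1)` and `r = -msc·s`. The vector `u x = msc · r^{|x|}` solves
`(H - z - msc·𝕀∂) u = δ_o`: at an interior vertex this is `s·(u_parent + (d-1)·u_child) = z·u`,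
at a leaf `s·u_parent = (z + msc)·u`, and at the root `(d-1)·s·u_child - z·u = 1`; each reduces to
`msc² + z·msc + 1 = 0` using `(d-1)·s² = 1`. The matrix is symmetric, and invertible because its
imaginary part is negative definite, so `u` is both the `o`-th row and the `o`-th column of `P`.
Hence `(P 𝕀∂ P)_{oo}` is the sum of `u x²` over the `(d-1)^ℓ` leaves, i.e.
`(d-1)^ℓ · msc² · (msc² s²)^ℓ = msc^{2ℓ+2}`.
-/

namespace Matrix

variable {n : Type*} [Fintype n] [DecidableEq n]

theorem det_sub_diagonal_ne_zero_of_isHermitian {𝕜 : Type*} [RCLike 𝕜] {H : Matrix n n 𝕜}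
    (hH : H.IsHermitian) {c : n → 𝕜} (hc : ∀ i, 0 < RCLike.im (c i)) :
    (H - diagonal c).det ≠ 0 := by
  intro hdet
  obtain ⟨v, hv0, hv⟩ := exists_mulVec_eq_zero_iff.mpr hdet
  have hHv : H *ᵥ v = fun i => c i * v i := by
    rw [sub_mulVec, sub_eq_zero] at hv
    rw [hv]
    ext i
    simp [mulVec_diagonal]
  have him : ∑ i, RCLike.im (c i) * RCLike.normSq (v i) = 0 := by
    have := hH.im_star_dotProduct_mulVec_self v
    rw [hHv, dotProduct, map_sum] at this
    convert this using 2 with i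
    simp only [Pi.star_apply, RCLike.star_def, RCLike.mul_im, RCLike.mul_re, RCLike.conj_re,
      RCLike.conj_im, RCLike.normSq_apply]
    ring
  apply hv0
  ext i
  have := (Finset.sum_eq_zero_iff_of_nonneg fun j _ =>
    mul_nonneg (hc j).le (RCLike.normSq_nonneg (v j))).mp him i (Finset.mem_univ i)
  simpa [(hc i).ne'] using this

theorem inv_mul_diagonal_mul_inv_apply_self {R : Type*} [CommRing R] {M : Matrix n n R}
    (hM : IsUnit M.det) (hMs : M.IsSymm) {u : n → R} {i : n} (hu : M *ᵥ u = Pi.single i 1)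
    (w : n → R) :
    (M⁻¹ * diagonal w * M⁻¹) i i = ∑ x, w x * u x ^ 2 := by
  have hcol : ∀ x, M⁻¹ x i = u x := by
    intro x
    have := congrFun (congrArg (M⁻¹ *ᵥ ·) hu) x
    simp only [mulVec_mulVec, nonsing_inv_mul _ hM, one_mulVec] at this
    simpa using this.symm
  have hrow : ∀ x, M⁻¹ i x = u x := by
    intro x
    rw [← hcol, ← transpose_apply M⁻¹, transpose_nonsing_inv, hMs.eq]
  rw [mul_apply]
  simp only [mul_diagonal, hrow, hcol]
  exact Finset.sum_congr rfl fun x _ => by ring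

end Matrix

namespace TreeBallY

open Finset

variable {m ℓ : ℕ}

theorem ext_iff {x y : TreeBallY m ℓ} : x = y ↔ x.1 = y.1 := Subtype.ext_iff

def child (y : TreeBallY m ℓ) (hy : y.1.length < ℓ) (a : Fin m) : TreeBallY m ℓ :=
  ⟨y.1 ++ [a], by simpa using hy⟩

@[simp]
theorem val_child (y : TreeBallY m ℓ) (hy : y.1.length < ℓ) (a : Fin m) :
    (child y hy a).1 = y.1 ++ [a] := rfl

def parent (y : TreeBallY m ℓ) : TreeBallY m ℓ :=
  ⟨y.1.dropLast, y.1.length_dropLast ▸ (Nat.sub_le _ _).trans y.2⟩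

@[simp]
theorem val_parent (y : TreeBallY m ℓ) : (parent y).1 = y.1.dropLast := rfl

theorem treeGraphY_adj_iff (x y : TreeBallY m ℓ) :
    (treeGraphY m ℓ).Adj x y ↔
      (∃ a : Fin m, y.1 = x.1 ++ [a]) ∨ ∃ a : Fin m, x.1 = y.1 ++ [a] := by
  rw [treeGraphY, SimpleGraph.fromRel_adj, and_iff_right_iff_imp]
  rintro (⟨a, h⟩ | ⟨a, h⟩) rfl <;> simpa using congrArg List.length h

theorem length_le_of_walk {x y : TreeBallY m ℓ} (w : (treeGraphY m ℓ).Walk x y) :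
    y.1.length ≤ x.1.length + w.length := by
  induction w with
  | nil => simp
  | cons h _ ih =>
    rw [SimpleGraph.Walk.length_cons]
    rcases (treeGraphY_adj_iff _ _).1 h with ⟨a, ha⟩ | ⟨a, ha⟩ <;>
      · have := congrArg List.length ha
        simp only [List.length_append, List.length_singleton] at this
        omega

theorem exists_walk_rootY (x : TreeBallY m ℓ) :
    ∃ w : (treeGraphY m ℓ).Walk (rootY m ℓ) x, w.length = x.1.length := by
  obtain ⟨l, hl⟩ := x
  induction l using List.reverseRecOn with
  | nil => exact ⟨.nil, rfl⟩
  | append_singleton s a ih =>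
    have hs : s.length ≤ ℓ := by
      simp only [List.length_append, List.length_singleton] at hl
      omega
    obtain ⟨w, hw⟩ := ih hs
    have hadj : (treeGraphY m ℓ).Adj ⟨s, hs⟩ ⟨s ++ [a], hl⟩ :=
      (treeGraphY_adj_iff _ _).2 (.inl ⟨a, rfl⟩)
    exact ⟨w.concat hadj, (w.length_concat hadj).trans (by simp [hw])⟩

theorem dist_rootY (x : TreeBallY m ℓ) : (treeGraphY m ℓ).dist (rootY m ℓ) x = x.1.length := by
  obtain ⟨w, hw⟩ := exists_walk_rootY x
  refine le_antisymm (hw ▸ SimpleGraph.dist_le w) ?_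
  obtain ⟨w', hw'⟩ := (SimpleGraph.Walk.reachable w).exists_walk_length_eq_dist
  rw [← hw']
  simpa [rootY] using length_le_of_walk w'

theorem card_filter_isChild (y : TreeBallY m ℓ) :
    (univ.filter fun x : TreeBallY m ℓ => ∃ a : Fin m, x.1 = y.1 ++ [a]).card =
      if y.1.length < ℓ then m else 0 := by
  split_ifs with hy
  · have : (univ.filter fun x : TreeBallY m ℓ => ∃ a : Fin m, x.1 = y.1 ++ [a]) =
        univ.map ⟨child y hy, fun a b h => by simpa using congrArg Subtype.val h⟩ := by
      ext x
      simp only [mem_filter, mem_univ, true_and, mem_map, ext_iff, eq_comm]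
      rfl
    rw [this, card_map, card_univ, Fintype.card_fin]
  · refine card_eq_zero.2 (filter_eq_empty_iff.2 fun x _ ⟨a, ha⟩ => hy ?_)
    have := x.2
    simp only [ha, List.length_append, List.length_singleton] at this
    omega

theorem card_filter_isParent (y : TreeBallY m ℓ) :
    (univ.filter fun x : TreeBallY m ℓ => ∃ a : Fin m, y.1 = x.1 ++ [a]).card =
      if y.1 = [] then 0 else 1 := by
  split_ifs with hy
  · exact card_eq_zero.2 (filter_eq_empty_iff.2 fun x _ ⟨a, ha⟩ => by simp [hy] at ha)
  · refine card_eq_one.2 ⟨parent y, ?_⟩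
    ext x
    simp only [mem_filter, mem_univ, true_and, mem_singleton, ext_iff, val_parent]
    constructor
    · rintro ⟨a, ha⟩
      rw [ha, List.dropLast_concat]
    · intro hx
      exact ⟨y.1.getLast hy, by rw [hx, List.dropLast_append_getLast]⟩

theorem sum_neighborFinset_treeGraphY {M : Type*} [AddCommMonoid M] (g : ℕ → M)
    (y : TreeBallY m ℓ) :
    ∑ x ∈ (treeGraphY m ℓ).neighborFinset y, g x.1.length =
      (if y.1.length < ℓ then m • g (y.1.length + 1) else 0) +
        if y.1 = [] then 0 else g (y.1.length - 1) := by
  have hsplit : (treeGraphY m ℓ).neighborFinset y =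
      (univ.filter fun x : TreeBallY m ℓ => ∃ a : Fin m, x.1 = y.1 ++ [a]) ∪
        (univ.filter fun x : TreeBallY m ℓ => ∃ a : Fin m, y.1 = x.1 ++ [a]) := by
    ext x
    simp [treeGraphY_adj_iff]
  have length_eq {u v : TreeBallY m ℓ} {a : Fin m} (h : u.1 = v.1 ++ [a]) :
      u.1.length = v.1.length + 1 := by
    simp [h]
  have hchildren : ∑ x ∈ univ.filter (fun x : TreeBallY m ℓ => ∃ a : Fin m, x.1 = y.1 ++ [a]),
      g x.1.length = (if y.1.length < ℓ then m else 0) • g (y.1.length + 1) := by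
    rw [← card_filter_isChild, ← sum_const]
    exact sum_congr rfl fun x hx => by
      obtain ⟨a, ha⟩ := (mem_filter.1 hx).2
      rw [length_eq ha]
  have hparents : ∑ x ∈ univ.filter (fun x : TreeBallY m ℓ => ∃ a : Fin m, y.1 = x.1 ++ [a]),
      g x.1.length = (if y.1 = [] then 0 else 1) • g (y.1.length - 1) := by
    rw [← card_filter_isParent, ← sum_const]
    exact sum_congr rfl fun x hx => by
      obtain ⟨a, ha⟩ := (mem_filter.1 hx).2
      rw [length_eq ha, Nat.add_sub_cancel]
  rw [hsplit, sum_union (disjoint_filter.2 fun x _ ⟨_, hc⟩ ⟨_, hp⟩ => by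
      have := length_eq hc; have := length_eq hp; omega), hchildren, hparents]
  split_ifs <;> simp

theorem card_filter_length_eq :
    (univ.filter fun x : TreeBallY m ℓ => x.1.length = ℓ).card = m ^ ℓ := by
  let leaves : {x : TreeBallY m ℓ // x.1.length = ℓ} ≃ List.Vector (Fin m) ℓ :=
    { toFun x := ⟨x.1.1, x.2⟩
      invFun v := ⟨⟨v.1, v.2.le⟩, v.2⟩
      left_inv _ := rfl
      right_inv _ := rfl }
  rw [← Fintype.card_subtype, Fintype.card_congr leaves, card_vector, Fintype.card_fin]

end TreeBallY

open Matrix TreeBallY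

noncomputable def invSqrtBranching (d : ℕ) : ℂ := (Real.sqrt ((d : ℝ) - 1) : ℂ)⁻¹

theorem isSelfAdjoint_invSqrtBranching (d : ℕ) : IsSelfAdjoint (invSqrtBranching d) := by
  simp [invSqrtBranching, IsSelfAdjoint, Complex.conj_ofReal]

theorem natCast_mul_invSqrtBranching_sq {d : ℕ} (hd : 2 ≤ d) :
    ((d - 1 : ℕ) : ℂ) * invSqrtBranching d ^ 2 = 1 := by
  have hd' : ((d - 1 : ℕ) : ℝ) = (d : ℝ) - 1 := by push_cast [show 1 ≤ d by omega]; ring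
  have hpos : (0 : ℝ) < (d : ℝ) - 1 := by rw [← hd']; exact_mod_cast (by omega : 0 < d - 1)
  rw [invSqrtBranching, inv_pow, ← Complex.ofReal_pow, Real.sq_sqrt hpos.le,
    ← Complex.ofReal_natCast, hd', ← Complex.ofReal_inv, ← Complex.ofReal_mul,
    mul_inv_cancel₀ hpos.ne', Complex.ofReal_one]

theorem HmatY_eq_smul_adjMatrix (d ℓ : ℕ) :
    HmatY d ℓ = invSqrtBranching d • (treeGraphY (d - 1) ℓ).adjMatrix ℂ := by
  ext x y
  simp [HmatY, invSqrtBranching, SimpleGraph.adjMatrix_apply]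

theorem IbdY_eq_diagonal (d ℓ : ℕ) :
    IbdY d ℓ = diagonal fun x => if x.1.length = ℓ then 1 else 0 := by
  simp only [IbdY, dist_rootY]

theorem HmatY_sub_smul_one_sub_smul_IbdY (d ℓ : ℕ) (z msc : ℂ) :
    HmatY d ℓ - z • 1 - msc • IbdY d ℓ =
      invSqrtBranching d • (treeGraphY (d - 1) ℓ).adjMatrix ℂ -
        diagonal fun x => z + msc * if x.1.length = ℓ then 1 else 0 := by
  rw [HmatY_eq_smul_adjMatrix, IbdY_eq_diagonal, sub_sub, smul_one_eq_diagonal, ← diagonal_smul,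
    diagonal_add]
  rfl

theorem det_adjMatrix_smul_sub_diagonal_ne_zero (d ℓ : ℕ) {z msc : ℂ} (hz : 0 < z.im)
    (him : 0 < msc.im) :
    (invSqrtBranching d • (treeGraphY (d - 1) ℓ).adjMatrix ℂ -
        diagonal fun x : TreeBallY (d - 1) ℓ =>
          z + msc * if x.1.length = ℓ then 1 else 0).det ≠ 0 :=
  det_sub_diagonal_ne_zero_of_isHermitian
    (((treeGraphY (d - 1) ℓ).isHermitian_adjMatrix ℂ).smul (isSelfAdjoint_invSqrtBranching d))
    fun x => by split_ifs <;> simp [hz, him, add_pos]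

theorem adjMatrix_smul_sub_diagonal_mulVec_eq_single {d : ℕ} (ℓ : ℕ) {z msc : ℂ} (hd : 2 ≤ d)
    (hmsc : msc ^ 2 + z * msc + 1 = 0) :
    (invSqrtBranching d • (treeGraphY (d - 1) ℓ).adjMatrix ℂ -
        diagonal fun x => z + msc * if x.1.length = ℓ then 1 else 0) *ᵥ
      (fun x => msc * (-msc * invSqrtBranching d) ^ x.1.length) =
      Pi.single (rootY (d - 1) ℓ) 1 := by
  have hs := natCast_mul_invSqrtBranching_sq hd
  set s := invSqrtBranching d
  ext y
  rw [sub_mulVec, smul_mulVec, Pi.sub_apply, Pi.smul_apply, SimpleGraph.adjMatrix_mulVec_apply,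
    sum_neighborFinset_treeGraphY (fun k => msc * (-msc * s) ^ k), mulVec_diagonal]
  have hroot : y = rootY (d - 1) ℓ ↔ y.1.length = 0 := by
    rw [TreeBallY.ext_iff, List.length_eq_zero_iff]
    rfl
  simp only [Pi.single_apply, hroot, List.length_eq_zero_iff.symm]
  obtain ⟨k, hk⟩ : ∃ k, y.1.length = k := ⟨_, rfl⟩
  have hkℓ : k ≤ ℓ := hk ▸ y.2
  rw [hk]
  -- in order: the root with `ℓ > 0`, the root with `ℓ = 0`, an interior vertex, a leaf
  rcases k with _ | k <;> rcases hkℓ.lt_or_eq with hlt | rfl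
  · simp only [hlt, hlt.ne, ↓reduceIte, nsmul_eq_mul, smul_eq_mul]
    linear_combination (-msc ^ 2) * hs - hmsc
  · simp only [lt_irrefl, ↓reduceIte, smul_eq_mul]
    linear_combination -hmsc
  · simp only [hlt, hlt.ne, ↓reduceIte, nsmul_eq_mul, smul_eq_mul, Nat.add_one_ne_zero,
      add_tsub_cancel_right]
    linear_combination (msc ^ 3 * s * (-(msc * s)) ^ k) * hs + (msc * s * (-(msc * s)) ^ k) * hmsc
  · simp only [lt_irrefl, ↓reduceIte, smul_eq_mul, Nat.add_one_ne_zero, add_tsub_cancel_right]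
    linear_combination (msc * s * (-(msc * s)) ^ k) * hmsc

theorem sum_leaves_mul_sq {d : ℕ} (ℓ : ℕ) (hd : 2 ≤ d) (msc : ℂ) :
    ∑ x : TreeBallY (d - 1) ℓ,
        (if x.1.length = ℓ then 1 else 0) * (msc * (-msc * invSqrtBranching d) ^ x.1.length) ^ 2 =
      msc ^ (2 * ℓ + 2) := by
  simp only [ite_mul, one_mul, zero_mul]
  rw [← Finset.sum_filter, Finset.sum_congr rfl fun x hx => by rw [(Finset.mem_filter.1 hx).2],
    Finset.sum_const, card_filter_length_eq, nsmul_eq_mul]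
  have hr : (-msc * invSqrtBranching d) ^ 2 = msc ^ 2 * invSqrtBranching d ^ 2 := by ring
  generalize -msc * invSqrtBranching d = r at hr ⊢
  calc (((d - 1 : ℕ) ^ ℓ : ℕ) : ℂ) * (msc * r ^ ℓ) ^ 2
      = msc ^ 2 * ((d - 1 : ℕ) * r ^ 2) ^ ℓ := by push_cast; ring
    _ = msc ^ (2 * ℓ + 2) := by
      rw [hr, mul_left_comm, natCast_mul_invSqrtBranching_sq hd]
      ring

theorem P_Ibd_P_oo_general (d ℓ : ℕ) (hd : 3 ≤ d)
    (z msc : ℂ) (hz : 0 < z.im)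
    (hmsc : msc ^ 2 + z * msc + 1 = 0) (him : 0 < msc.im)
    (P : Matrix (TreeBallY (d - 1) ℓ) (TreeBallY (d - 1) ℓ) ℂ)
    (hP : P = (HmatY d ℓ - z • 1 - msc • IbdY d ℓ)⁻¹) :
    (P * IbdY d ℓ * P) (rootY (d - 1) ℓ) (rootY (d - 1) ℓ) = msc ^ (2 * ℓ + 2) := by
  have hd' : 2 ≤ d := by omega
  rw [hP, HmatY_sub_smul_one_sub_smul_IbdY, IbdY_eq_diagonal,
    inv_mul_diagonal_mul_inv_apply_self
      (isUnit_iff_ne_zero.2 (det_adjMatrix_smul_sub_diagonal_ne_zero d ℓ hz him))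
      (((SimpleGraph.isSymm_adjMatrix _).smul _).sub (isSymm_diagonal _))
      (adjMatrix_smul_sub_diagonal_mulVec_eq_single ℓ hd' hmsc),
    sum_leaves_mul_sq ℓ hd' msc]

/-- For `d ≥ 3`, `ℓ ≥ 1`, `z ∈ ℂ` with `Im z > 0`, `m_sc(z)` the unique root of
`m² + z m + 1 = 0` with positive imaginary part, and `P` the inverse of
`H_{𝒴_ℓ} - z·I - m_sc(z)·𝕀∂`, one has `(P·𝕀∂·P)_{oo} = m_sc(z)^{2ℓ+2}`. -/
theorem P_Ibd_P_oo (d ℓ : ℕ) (hd : 3 ≤ d) (hℓ : 1 ≤ ℓ)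
    (z msc : ℂ) (hz : 0 < z.im)
    (hmsc : msc ^ 2 + z * msc + 1 = 0) (him : 0 < msc.im)
    (P : Matrix (TreeBallY (d - 1) ℓ) (TreeBallY (d - 1) ℓ) ℂ)
    (hP : P = (HmatY d ℓ - z • 1 - msc • IbdY d ℓ)⁻¹) :
    (P * IbdY d ℓ * P) (rootY (d - 1) ℓ) (rootY (d - 1) ℓ) = msc ^ (2 * ℓ + 2) :=
  P_Ibd_P_oo_general d ℓ hd z msc hz hmsc him P hP
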